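/- Let N ≥ 2, let 𝒜 be an N-mode complex array with mode sizes D_1,…,D_N, let U^{(p)} be a unitary D_p × D_p complex matrix for each p, and let ℬ = 𝒜 ×_1 U^{(1)} ×_2 ⋯ ×_N U^{(N)}. Then for every 1 ≤ k ≤ N−1, all disjoint index tuples R = (r_1,…,r_k), C = (c_1,…,c_{N−k}) whose union is {1,…,N}, and all n ∈ {1,…,k}, m ∈ {1,…,N−k}: ‖𝐁_{(R,n;C,m)}‖_tr = ‖𝐀_{(R,n;C,m)}‖_tr. -/

import Mathlib

open Matrix ComplexOrder

/-- The trace norm `‖A‖_tr = Tr((A†A)^{1/2})` of a complex matrix (the sum of its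
singular values). -/
noncomputable def traceNorm {m n : Type*} [Fintype m] [Fintype n] [DecidableEq n]
    (A : Matrix m n ℂ) : ℝ :=
  (((Matrix.posSemidef_conjTranspose_mul_self A).isHermitian.eigenvectorUnitary : Matrix n n ℂ) *
      diagonal (((↑) : ℝ → ℂ) ∘ Real.sqrt ∘ (Matrix.posSemidef_conjTranspose_mul_self A).isHermitian.eigenvalues) *
      (star (Matrix.posSemidef_conjTranspose_mul_self A).isHermitian.eigenvectorUnitary :
        Matrix n n ℂ)).trace.re

/-- The (0-based) mixed-radix row index of Definition 1 of the paper: for mode sizes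
`D : Fin k → ℕ`, reference mode `n` (0-based), and a multi-index `i`, this is
`(∏_{t ≤ n} D t)·∑_{s > n} i_s·(∏_{t > s} D t) + ∑_{s ≤ n} i_s·(∏_{s < t ≤ n} D t)`. -/
def mixIdx {k : ℕ} (D : Fin k → ℕ) (n : ℕ) (i : ∀ s, Fin (D s)) : ℕ :=
  (∏ t ∈ Finset.univ.filter (fun t : Fin k => (t : ℕ) ≤ n), D t) *
      ∑ s ∈ Finset.univ.filter (fun s : Fin k => n < (s : ℕ)),
        (i s : ℕ) * ∏ t ∈ Finset.univ.filter (fun t : Fin k => s < t), D t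
    + ∑ s ∈ Finset.univ.filter (fun s : Fin k => (s : ℕ) ≤ n),
        (i s : ℕ) * ∏ t ∈ Finset.univ.filter (fun t : Fin k => s < t ∧ (t : ℕ) ≤ n), D t

/-- The `n`-mode vectorization of a tensor with mode sizes `D : Fin k → ℕ`: the column
vector of length `∏ D s` whose entry in the row given by the mixed-radix index formula
(with reference mode `n`) is the corresponding entry of the tensor. -/
noncomputable def vecUnfold {k : ℕ} (D : Fin k → ℕ) (n : ℕ)
    (A : (∀ s, Fin (D s)) → ℂ) : Fin (∏ s, D s) → ℂ :=
  fun x => ∑ i : ∀ s, Fin (D s), if mixIdx D n i = (x : ℕ) then A i else 0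

/-- The mixed `(R,n;C,m)`-mode matrix unfolding of an `N`-mode tensor `A` with mode sizes
`D`, where the row modes are `r 0, …, r (k-1)`, the column modes are `c 0, …, c (l-1)`,
and `n`, `m` are the reference modes: the entry in row `mixIdx (D∘r) n (i∘r)` and column
`mixIdx (D∘c) m (i∘c)` is `A i`. -/
noncomputable def unfoldAmbient {N k l : ℕ} (D : Fin N → ℕ)
    (r : Fin k → Fin N) (c : Fin l → Fin N) (n m : ℕ)
    (A : (∀ p, Fin (D p)) → ℂ) :
    Matrix (Fin (∏ s, D (r s))) (Fin (∏ s, D (c s))) ℂ :=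
  Matrix.of fun x y => ∑ i : ∀ p, Fin (D p),
    if mixIdx (fun s => D (r s)) n (fun s => i (r s)) = (x : ℕ) ∧
        mixIdx (fun s => D (c s)) m (fun s => i (c s)) = (y : ℕ) then A i else 0

/-!
The trace norm `Tr √(MᴴM)` is invariant under `M ↦ U M V` whenever `UᴴU = 1` and `VVᴴ = 1`,
because `Vᴴ √(MᴴM) V` is the positive square root of `(UMV)ᴴ(UMV)`. The index maps `mixIdx` are
bijections (mixed-radix numerals with the modes taken in a cyclic order), so a mixed mode
unfolding is a row and column permutation of the matricization indexed by the multi-indices of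
the row and column modes. On that matricization the mode products act as
`M ↦ (⊗_{s ∈ R} U_s) M (⊗_{s ∈ C} U_s)ᵀ`, and Kronecker products of unitaries are unitary.
-/

open scoped MatrixOrder in
theorem traceNorm_eq_re_trace_sqrt {m n : Type*} [Fintype m] [Fintype n] [DecidableEq n]
    (A : Matrix m n ℂ) : traceNorm A = (CFC.sqrt (Aᴴ * A)).trace.re := by
  rw [traceNorm, CFC.sqrt_eq_real_sqrt _ (posSemidef_conjTranspose_mul_self A).nonneg,
    cfcₙ_eq_cfc, (posSemidef_conjTranspose_mul_self A).isHermitian.cfc_eq, IsHermitian.cfc,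
    Unitary.conjStarAlgAut_apply]
  rfl

open scoped MatrixOrder in
theorem traceNorm_mul_mul {ι₁ ι₂ κ₁ κ₂ : Type*} [Fintype ι₁] [Fintype ι₂] [Fintype κ₁]
    [Fintype κ₂] [DecidableEq ι₁] [DecidableEq κ₁] [DecidableEq κ₂]
    (U : Matrix ι₂ ι₁ ℂ) (V : Matrix κ₁ κ₂ ℂ) (hU : Uᴴ * U = 1) (hV : V * Vᴴ = 1)
    (M : Matrix ι₁ κ₁ ℂ) : traceNorm (U * M * V) = traceNorm M := by
  set S := CFC.sqrt (Mᴴ * M)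
  have hS : S * S = Mᴴ * M :=
    CFC.sqrt_mul_sqrt_self _ (posSemidef_conjTranspose_mul_self M).nonneg
  have hsqrt : CFC.sqrt ((U * M * V)ᴴ * (U * M * V)) = Vᴴ * S * V := by
    refine CFC.sqrt_unique ?_ ?_
    · calc Vᴴ * S * V * (Vᴴ * S * V) = Vᴴ * S * (V * Vᴴ) * S * V := by
            simp only [Matrix.mul_assoc]
        _ = (U * M * V)ᴴ * (U * M * V) := by
            simp only [hV, Matrix.mul_one, conjTranspose_mul, Matrix.mul_assoc]
            rw [← Matrix.mul_assoc Uᴴ, hU, Matrix.one_mul, ← Matrix.mul_assoc S, hS,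
              Matrix.mul_assoc]
    · simpa using ((CFC.sqrt_nonneg (Mᴴ * M)).posSemidef.mul_mul_conjTranspose_same Vᴴ).nonneg
  rw [traceNorm_eq_re_trace_sqrt, traceNorm_eq_re_trace_sqrt, hsqrt, trace_mul_cycle, hV,
    Matrix.one_mul]

section PermutationMatrix

variable {R α β : Type*} [Semiring R] [StarRing R] [DecidableEq β] (g : α ≃ β)

theorem conjTranspose_toMatrix_toPEquiv_mul_self [Fintype α] :
    (g.toPEquiv.toMatrix : Matrix α β R)ᴴ * (g.toPEquiv.toMatrix : Matrix α β R) = 1 := by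
  rw [PEquiv.mul_toMatrix_toPEquiv]
  ext i j
  simp [PEquiv.toMatrix_apply, one_apply, apply_ite star, eq_comm]

theorem toMatrix_toPEquiv_mul_conjTranspose_self [DecidableEq α] [Fintype β] :
    (g.toPEquiv.toMatrix : Matrix α β R) * (g.toPEquiv.toMatrix : Matrix α β R)ᴴ = 1 := by
  rw [PEquiv.toMatrix_toPEquiv_mul]
  ext i j
  simp [PEquiv.toMatrix_apply, one_apply, apply_ite star, eq_comm]

end PermutationMatrix

theorem traceNorm_submatrix {ι₁ ι₂ κ₁ κ₂ : Type*} [Fintype ι₁] [Fintype ι₂] [Fintype κ₁]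
    [Fintype κ₂] [DecidableEq ι₁] [DecidableEq ι₂] [DecidableEq κ₁] [DecidableEq κ₂]
    (e : ι₂ ≃ ι₁) (f : κ₂ ≃ κ₁) (M : Matrix ι₁ κ₁ ℂ) :
    traceNorm (M.submatrix e f) = traceNorm M := by
  rw [← traceNorm_mul_mul e.toPEquiv.toMatrix f.symm.toPEquiv.toMatrix
    (conjTranspose_toMatrix_toPEquiv_mul_self e)
    (toMatrix_toPEquiv_mul_conjTranspose_self f.symm) M, PEquiv.toMatrix_toPEquiv_mul,
    PEquiv.mul_toMatrix_toPEquiv, submatrix_submatrix]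
  rfl

theorem Fin.prod_univ_castLE_eq_prod_Iio {M : Type*} [CommMonoid M] {k : ℕ} (j : Fin k)
    (f : Fin k → M) : ∏ j' : Fin j, f (Fin.castLE j.is_lt.le j') = ∏ t ∈ Finset.Iio j, f t := by
  have h := Finset.prod_map Finset.univ (Fin.castLEEmb j.is_lt.le) f
  rw [Fin.coe_castLEEmb] at h
  rw [← h]
  congr 1
  ext t
  simp only [Finset.mem_map, Finset.mem_univ, true_and, Fin.coe_castLEEmb, Finset.mem_Iio]
  exact ⟨fun ⟨a, ha⟩ => ha ▸ a.is_lt, fun ht => ⟨⟨t, ht⟩, rfl⟩⟩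

def radixEquiv {k : ℕ} (σ : Equiv.Perm (Fin k)) (D : Fin k → ℕ) :
    (∀ s, Fin (D s)) ≃ Fin (∏ s, D s) :=
  ((Equiv.piCongrLeft' _ σ).trans finPiFinEquiv).trans (finCongr (Equiv.prod_comp σ.symm D))

theorem radixEquiv_val {k : ℕ} (σ : Equiv.Perm (Fin k)) (D : Fin k → ℕ) (i : ∀ s, Fin (D s)) :
    (radixEquiv σ D i : ℕ) =
      ∑ s, (i s : ℕ) * ∏ t ∈ Finset.univ.filter (fun t => σ t < σ s), D t := by
  simp only [radixEquiv, Equiv.trans_apply, finCongr_apply, Fin.val_cast, finPiFinEquiv_apply,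
    Equiv.piCongrLeft'_apply, Fin.prod_univ_castLE_eq_prod_Iio (f := fun t => D (σ.symm t))]
  refine Fintype.sum_equiv σ.symm _ _ fun j => ?_
  rw [Equiv.apply_symm_apply]
  congr 1
  exact Finset.prod_equiv σ.symm (by simp) (fun _ _ => rfl)

theorem Fin.sub_lt_sub_left_iff {k : ℕ} [NeZero k] {a s t : Fin k} :
    a - t < a - s ↔ if s ≤ a then s < t ∧ t ≤ a else t ≤ a ∨ s < t := by
  have hsub : ∀ x : Fin k,
      ((a - x : Fin k) : ℕ) = if x ≤ a then (a : ℕ) - x else k + (a : ℕ) - x := by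
    intro x
    split_ifs with h
    · exact Fin.coe_sub_iff_le.mpr h
    · exact Fin.coe_sub_iff_lt.mpr (not_le.mp h)
  rw [Fin.lt_def, hsub, hsub]
  simp only [Fin.le_def, Fin.lt_def]
  have := a.is_lt; have := s.is_lt; have := t.is_lt
  split_ifs <;> omega

-- Read least significant first, the digits of `mixIdx D n` come in the cyclic order
-- `n, n - 1, …, 0, k - 1, …, n + 1`, i.e. ordered by `s ↦ n - s` in `Fin k`.
theorem mixIdx_eq_sum_subLeft {k : ℕ} [NeZero k] (D : Fin k → ℕ) {n : ℕ} (hn : n < k)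
    (i : ∀ s, Fin (D s)) :
    mixIdx D n i = ∑ s, (i s : ℕ) * ∏ t ∈ Finset.univ.filter
      (fun t => Equiv.subLeft (⟨n, hn⟩ : Fin k) t < Equiv.subLeft ⟨n, hn⟩ s), D t := by
  simp only [Equiv.subLeft_apply, Fin.sub_lt_sub_left_iff, Fin.le_def]
  rw [mixIdx, Finset.mul_sum,
    ← Finset.sum_filter_add_sum_filter_not Finset.univ (fun s : Fin k => n < (s : ℕ))]
  congr 1
  · refine Finset.sum_congr rfl fun s hs => ?_
    rw [Finset.mem_filter] at hs
    simp only [if_neg (not_le.mpr hs.2)]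
    rw [Finset.filter_or, Finset.prod_union, mul_left_comm]
    refine Finset.disjoint_filter.mpr fun t _ ht hst => ?_
    rw [Fin.lt_def] at hst
    omega
  · refine Finset.sum_congr (Finset.filter_congr fun s _ => not_lt.symm) fun s hs => ?_
    rw [Finset.mem_filter] at hs
    simp only [if_pos (not_lt.mp hs.2)]

section PiKronecker

variable {R ι : Type*} [CommSemiring R] [Fintype ι] {m n p : ι → Type*}

def piKronecker (M : ∀ s, Matrix (m s) (n s) R) : Matrix (∀ s, m s) (∀ s, n s) R :=
  of fun a b => ∏ s, M s (a s) (b s)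

theorem piKronecker_mul [DecidableEq ι] [∀ s, Fintype (n s)] (M : ∀ s, Matrix (m s) (n s) R)
    (M' : ∀ s, Matrix (n s) (p s) R) :
    piKronecker M * piKronecker M' = piKronecker fun s => M s * M' s := by
  ext a c
  simp only [piKronecker, mul_apply, of_apply, ← Finset.prod_mul_distrib]
  exact (Fintype.prod_sum fun s b => M s (a s) b * M' s b (c s)).symm

theorem piKronecker_one [∀ s, DecidableEq (m s)] :
    piKronecker (fun s => (1 : Matrix (m s) (m s) R)) = 1 := by
  ext a b
  simp only [piKronecker, of_apply, one_apply, Finset.prod_boole, Finset.mem_univ, true_implies,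
    funext_iff]

theorem conjTranspose_piKronecker [StarRing R] (M : ∀ s, Matrix (m s) (n s) R) :
    (piKronecker M)ᴴ = piKronecker fun s => (M s)ᴴ := by
  ext a b
  simp [piKronecker, star_prod]

end PiKronecker

theorem piKronecker_mem_unitaryGroup {R ι : Type*} [CommRing R] [StarRing R] [Fintype ι]
    [DecidableEq ι] {m : ι → Type*} [∀ s, Fintype (m s)] [∀ s, DecidableEq (m s)]
    {U : ∀ s, Matrix (m s) (m s) R}
    (hU : ∀ s, U s ∈ unitaryGroup (m s) R) : piKronecker U ∈ unitaryGroup (∀ s, m s) R := by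
  rw [mem_unitaryGroup_iff', star_eq_conjTranspose, conjTranspose_piKronecker, piKronecker_mul]
  simp only [← star_eq_conjTranspose, fun s => mem_unitaryGroup_iff'.mp (hU s), piKronecker_one]

section Split

variable {ι κ₁ κ₂ : Type*} {r : κ₁ → ι} {c : κ₂ → ι}

noncomputable def piSplitEquiv (hb : Function.Bijective (Sum.elim r c)) (P : ι → Type*) :
    (∀ p, P p) ≃ (∀ s, P (r s)) × (∀ s, P (c s)) :=
  (Equiv.piCongrLeft' P (Equiv.ofBijective _ hb).symm).trans (Equiv.sumPiEquivProdPi _)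

theorem prod_eq_prod_mul_prod_of_bijective {M : Type*} [CommMonoid M] [Fintype ι] [Fintype κ₁]
    [Fintype κ₂] (hb : Function.Bijective (Sum.elim r c)) (f : ι → M) :
    ∏ p, f p = (∏ s, f (r s)) * ∏ s, f (c s) := by
  rw [← hb.prod_comp f, Fintype.prod_sum_type]
  rfl

variable (hb : Function.Bijective (Sum.elim r c)) {P : ι → Type*}

theorem piSplitEquiv_apply (i : ∀ p, P p) :
    piSplitEquiv hb P i = (fun s => i (r s), fun s => i (c s)) :=
  rfl

theorem piSplitEquiv_symm_apply_left (a : ∀ s, P (r s)) (b : ∀ s, P (c s)) (s : κ₁) :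
    (piSplitEquiv hb P).symm (a, b) (r s) = a s :=
  congrFun (congrArg Prod.fst ((piSplitEquiv hb P).apply_symm_apply (a, b))) s

theorem piSplitEquiv_symm_apply_right (a : ∀ s, P (r s)) (b : ∀ s, P (c s)) (s : κ₂) :
    (piSplitEquiv hb P).symm (a, b) (c s) = b s :=
  congrFun (congrArg Prod.snd ((piSplitEquiv hb P).apply_symm_apply (a, b))) s

noncomputable def matricization {R : Type*} (X : (∀ p, P p) → R) :
    Matrix (∀ s, P (r s)) (∀ s, P (c s)) R :=
  of fun a b => X ((piSplitEquiv hb P).symm (a, b))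

theorem matricization_modeProduct {R : Type*} [CommSemiring R] [Fintype ι] [DecidableEq ι]
    [Fintype κ₁] [DecidableEq κ₁] [Fintype κ₂] [DecidableEq κ₂] [∀ p, Fintype (P p)]
    (U : ∀ p, Matrix (P p) (P p) R) (A : (∀ p, P p) → R) :
    matricization hb (fun i' => ∑ i, A i * ∏ p, U p (i' p) (i p)) =
      piKronecker (fun s => U (r s)) * matricization hb A * (piKronecker fun s => U (c s))ᵀ := by
  ext a b
  simp only [matricization, piKronecker, of_apply, mul_apply, transpose_apply, Finset.sum_mul]
  rw [← (piSplitEquiv hb P).symm.sum_comp, Fintype.sum_prod_type, Finset.sum_comm]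
  refine Finset.sum_congr rfl fun b' _ => Finset.sum_congr rfl fun a' _ => ?_
  simp only [prod_eq_prod_mul_prod_of_bijective hb, piSplitEquiv_symm_apply_left,
    piSplitEquiv_symm_apply_right]
  ring

end Split

noncomputable def mixEquiv {k : ℕ} (D : Fin k → ℕ) {n : ℕ} (hn : n < k) :
    (∀ s, Fin (D s)) ≃ Fin (∏ s, D s) :=
  haveI : NeZero k := ⟨by omega⟩
  radixEquiv (Equiv.subLeft ⟨n, hn⟩) D

theorem mixEquiv_val {k : ℕ} (D : Fin k → ℕ) {n : ℕ} (hn : n < k) (i : ∀ s, Fin (D s)) :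
    (mixEquiv D hn i : ℕ) = mixIdx D n i := by
  have : NeZero k := ⟨by omega⟩
  rw [mixEquiv, radixEquiv_val, mixIdx_eq_sum_subLeft D hn]

theorem unfoldAmbient_eq_submatrix {N k l : ℕ} (D : Fin N → ℕ) {r : Fin k → Fin N}
    {c : Fin l → Fin N} (hb : Function.Bijective (Sum.elim r c)) {n m : ℕ} (hn : n < k)
    (hm : m < l) (X : (∀ p, Fin (D p)) → ℂ) :
    unfoldAmbient D r c n m X =
      (matricization hb X).submatrix (mixEquiv _ hn).symm (mixEquiv _ hm).symm := by
  ext x y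
  have hiff : ∀ i : ∀ p, Fin (D p),
      (mixIdx (fun s => D (r s)) n (fun s => i (r s)) = x ∧
        mixIdx (fun s => D (c s)) m (fun s => i (c s)) = y) ↔
      i = (piSplitEquiv hb _).symm ((mixEquiv _ hn).symm x, (mixEquiv _ hm).symm y) := by
    intro i
    rw [← mixEquiv_val _ hn, ← mixEquiv_val _ hm, Fin.val_inj, Fin.val_inj,
      ← Equiv.eq_symm_apply, ← Equiv.eq_symm_apply, ← Prod.mk.injEq, ← piSplitEquiv_apply hb,
      Equiv.eq_symm_apply]
  simp only [unfoldAmbient, of_apply, submatrix_apply, matricization, hiff, Finset.sum_ite_eq',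
    Finset.mem_univ, if_true]

theorem stmt_8_general (N k l : ℕ)
    (D : Fin N → ℕ) (U : ∀ p, Matrix (Fin (D p)) (Fin (D p)) ℂ)
    (hU : ∀ p, U p ∈ Matrix.unitaryGroup (Fin (D p)) ℂ)
    (A : (∀ p, Fin (D p)) → ℂ)
    (r : Fin k → Fin N) (c : Fin l → Fin N)
    (hb : Function.Bijective (Sum.elim r c))
    (n m : ℕ) (hn : n < k) (hm : m < l) :
    traceNorm (unfoldAmbient D r c n m (fun i' => ∑ i, A i * ∏ p, U p (i' p) (i p)))
      = traceNorm (unfoldAmbient D r c n m A) := by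
  classical
  have hR := piKronecker_mem_unitaryGroup fun s => hU (r s)
  have hC := transpose_mem_unitaryGroup_iff.mpr (piKronecker_mem_unitaryGroup fun s => hU (c s))
  rw [unfoldAmbient_eq_submatrix D hb hn hm, unfoldAmbient_eq_submatrix D hb hn hm,
    traceNorm_submatrix, traceNorm_submatrix, matricization_modeProduct]
  exact traceNorm_mul_mul _ _ (mem_unitaryGroup_iff'.mp hR) (mem_unitaryGroup_iff.mp hC) _

/-- (Unitary invariance of the trace norm of mixed mode unfoldings.)
If `ℬ = 𝒜 ×₁ U^{(1)} ×₂ ⋯ ×_N U^{(N)}` with all `U^{(p)}` unitary, then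
`‖𝐁_{(R,n;C,m)}‖_tr = ‖𝐀_{(R,n;C,m)}‖_tr`. -/
theorem stmt_8 (N k l : ℕ) (hN : 2 ≤ N) (hk : 1 ≤ k) (hl : 1 ≤ l)
    (D : Fin N → ℕ) (U : ∀ p, Matrix (Fin (D p)) (Fin (D p)) ℂ)
    (hU : ∀ p, U p ∈ Matrix.unitaryGroup (Fin (D p)) ℂ)
    (A : (∀ p, Fin (D p)) → ℂ)
    (r : Fin k → Fin N) (c : Fin l → Fin N)
    (hb : Function.Bijective (Sum.elim r c))
    (n m : ℕ) (hn : n < k) (hm : m < l) :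
    traceNorm (unfoldAmbient D r c n m (fun i' => ∑ i, A i * ∏ p, U p (i' p) (i p)))
      = traceNorm (unfoldAmbient D r c n m A) :=
  stmt_8_general N k l D U hU A r c hb n m hn hm
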